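/- For every l ≥ 1, 1 − (0.1)^l · (1 + l + (0.1)·l) > 0; consequently, for all v ≥ 1, D(v−1‖v−0.1) − 2·D(v‖v−0.1) = Σ_{l≥1} (1/(v^l l(l+1)))·(1 − (0.1)^l(1 + 1.1·l)) > 0. -/

import Mathlib

/-!
`D` is homogeneous, so with `s = a / v` and `t = b / v` we have
`D(v - a ‖ v - b) = v · D(1 - s ‖ 1 - t) = v · ((1 - s) (log (1 - s) - log (1 - t)) + s - t)`,
and expanding `-log (1 - y) = Σ yⁿ / n` gives the series. The terms in `s` are grouped as
`Σ sⁿ⁺¹ / (n (n + 1)) = s + (1 - s) log (1 - s)`, which still converges at `s = 1`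
(telescoping), so the case `v = a = 1` is covered. The theorem is the case `(a, b) = (1, 0.1)`
minus twice the case `(0, 0.1)`; its coefficients are positive by Bernoulli's inequality,
`0.1ˡ (1 + 1.1 l) ≤ 0.1ˡ · 2.1ˡ = 0.21ˡ < 1`.
-/

noncomputable def D (x y : ℝ) : ℝ := x * Real.log (x / y) - x + y

open Real Filter Topology

lemma hasSum_sub_succ_of_antitone {f : ℕ → ℝ} {l : ℝ} (hf : Antitone f)
    (hl : Tendsto f atTop (𝓝 l)) : HasSum (fun n => f n - f (n + 1)) (f 0 - l) := by
  rw [hasSum_iff_tendsto_nat_of_nonneg fun n => sub_nonneg.2 (hf n.le_succ)]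
  simp_rw [Finset.sum_range_sub']
  exact tendsto_const_nhds.sub (hl.comp (tendsto_add_atTop_nat 0))

lemma hasSum_mul_pow_div_sub_pow_div {y : ℝ} (c : ℝ) (hy : |y| < 1) :
    HasSum (fun n : ℕ => c * (y ^ (n + 1) / (n + 1)) - y ^ (n + 2) / (n + 2))
      (y + (1 - c) * log (1 - y)) := by
  have hL := hasSum_pow_div_log_of_abs_lt_one hy
  rw [show y + (1 - c) * log (1 - y) = c * -log (1 - y) - (-log (1 - y) - y) by ring]
  refine (hL.mul_left c).sub ?_
  have hL' := (hasSum_nat_add_iff' 1).2 hL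
  simp only [Finset.sum_range_one, zero_add, pow_one, Nat.cast_zero, div_one] at hL'
  convert hL' using 3 with n
  push_cast
  ring

/-- At `s = 1` the value is read with `log 0 = 0`, which agrees with the limit of
`(1 - s) * log (1 - s)`. -/
lemma hasSum_pow_div_succ_mul_succ_succ {s : ℝ} (hs₀ : -1 < s) (hs₁ : s ≤ 1) :
    HasSum (fun n : ℕ => s ^ (n + 2) / ((n + 1) * (n + 2))) (s + (1 - s) * log (1 - s)) := by
  rcases hs₁.lt_or_eq with hs₁ | rfl
  · convert hasSum_mul_pow_div_sub_pow_div s (abs_lt.2 ⟨hs₀, hs₁⟩) using 2 with n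
    field_simp
    ring
  · have hf : Antitone fun n : ℕ => (1 : ℝ) / (n + 1) := fun m n h => by
      dsimp only; gcongr
    convert hasSum_sub_succ_of_antitone hf tendsto_one_div_add_atTop_nhds_zero_nat using 1
    · ext n; push_cast; field_simp; ring
    · simp

lemma D_mul_mul {v : ℝ} (hv : v ≠ 0) (x y : ℝ) : D (v * x) (v * y) = v * D x y := by
  rw [D, D, mul_div_mul_left _ _ hv]
  ring

lemma D_eq_mul_log_sub_log (x : ℝ) {y : ℝ} (hy : y ≠ 0) :
    D x y = x * (log x - log y) - x + y := by
  rcases eq_or_ne x 0 with rfl | hx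
  · simp [D]
  · rw [D, log_div hx hy]

lemma hasSum_D_one_sub_one_sub {s t : ℝ} (hs₀ : -1 < s) (hs₁ : s ≤ 1) (ht : |t| < 1) :
    HasSum (fun n : ℕ => (s ^ (n + 2) - t ^ (n + 1) * (s + (s - t) * (n + 1))) / ((n + 1) * (n + 2)))
      (D (1 - s) (1 - t)) := by
  have ht₁ : 1 - t ≠ 0 := by linarith [(abs_lt.1 ht).2]
  rw [D_eq_mul_log_sub_log _ ht₁,
    show (1 - s) * (log (1 - s) - log (1 - t)) - (1 - s) + (1 - t) =
      (s + (1 - s) * log (1 - s)) - (t + (1 - s) * log (1 - t)) by ring]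
  convert! (hasSum_pow_div_succ_mul_succ_succ hs₀ hs₁).sub
    (hasSum_mul_pow_div_sub_pow_div s ht) using 2 with n
  field_simp
  ring

theorem hasSum_D_sub_sub {v a b : ℝ} (hv : 0 < v) (ha₀ : -v < a) (ha₁ : a ≤ v) (hb : |b| < v) :
    HasSum (fun n : ℕ => (a ^ (n + 2) - b ^ (n + 1) * (a + (a - b) * (n + 1))) /
      (v ^ (n + 1) * ((n + 1) * (n + 2)))) (D (v - a) (v - b)) := by
  have hs₀ : -1 < a / v := by rwa [lt_div_iff₀ hv, neg_one_mul]
  have hs₁ : a / v ≤ 1 := (div_le_one hv).2 ha₁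
  have ht : |b / v| < 1 := by rwa [abs_div, abs_of_pos hv, div_lt_one hv]
  have hD : D (v - a) (v - b) = v * D (1 - a / v) (1 - b / v) := by
    rw [← D_mul_mul hv.ne', mul_one_sub, mul_one_sub, mul_div_cancel₀ _ hv.ne',
      mul_div_cancel₀ _ hv.ne']
  rw [hD]
  convert! (hasSum_D_one_sub_one_sub hs₀ hs₁ ht).mul_left v using 2 with n
  rw [div_pow, div_pow]
  field_simp
  ring

lemma pow_mul_one_add_mul_lt_one {q c : ℝ} (hq : 0 ≤ q) (hc : -1 ≤ c) (hqc : q * (1 + c) < 1)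
    {l : ℕ} (hl : l ≠ 0) : q ^ l * (1 + l * c) < 1 :=
  calc q ^ l * (1 + l * c) ≤ q ^ l * (1 + c) ^ l := by
        gcongr
        exact one_add_mul_le_pow (by linarith) l
    _ = (q * (1 + c)) ^ l := (mul_pow _ _ _).symm
    _ < 1 := pow_lt_one₀ (mul_nonneg hq (by linarith)) hqc hl

/-- For every `l ≥ 1`, `1 - (0.1)^l (1 + l + 0.1 l) > 0`; consequently, for all `v ≥ 1`,
`D(v-1 ‖ v-0.1) - 2 D(v ‖ v-0.1)` equals the positive series
`Σ_{l≥1} (1/(v^l l(l+1))) (1 - (0.1)^l (1 + 1.1 l))` and is strictly positive. -/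
theorem kl_diff_positive :
    (∀ l : ℕ, 1 ≤ l → 0 < 1 - (0.1 : ℝ) ^ l * (1 + (l : ℝ) + 0.1 * (l : ℝ))) ∧
    ∀ v : ℝ, 1 ≤ v →
      (D (v - 1) (v - 0.1) - 2 * D v (v - 0.1) =
        ∑' l : ℕ, (1 / (v ^ (l + 1) * (((l + 1 : ℕ) : ℝ) * ((l + 2 : ℕ) : ℝ)))) *
          (1 - (0.1 : ℝ) ^ (l + 1) * (1 + 1.1 * ((l + 1 : ℕ) : ℝ)))) ∧
      0 < D (v - 1) (v - 0.1) - 2 * D v (v - 0.1) := by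
  have hcoef (l : ℕ) (hl : 1 ≤ l) : 0 < 1 - (0.1 : ℝ) ^ l * (1 + (l : ℝ) + 0.1 * (l : ℝ)) := by
    have := pow_mul_one_add_mul_lt_one (q := 0.1) (c := 1.1) (by norm_num) (by norm_num)
      (by norm_num) (l := l) (by omega)
    linarith
  refine ⟨hcoef, fun v hv => ?_⟩
  have hv₀ : 0 < v := by linarith
  have hb : |(0.1 : ℝ)| < v := by rw [abs_of_pos (by norm_num)]; linarith
  set g : ℕ → ℝ := fun l => (1 / (v ^ (l + 1) * (((l + 1 : ℕ) : ℝ) * ((l + 2 : ℕ) : ℝ)))) *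
    (1 - (0.1 : ℝ) ^ (l + 1) * (1 + 1.1 * ((l + 1 : ℕ) : ℝ)))
  have h₁ := hasSum_D_sub_sub hv₀ (by linarith) hv hb
  have h₀ := hasSum_D_sub_sub hv₀ (by linarith) hv₀.le hb
  rw [sub_zero] at h₀
  have hsum : HasSum g (D (v - 1) (v - 0.1) - 2 * D v (v - 0.1)) := by
    convert! h₁.sub (h₀.mul_left 2) using 2 with n
    push_cast [g]
    field_simp
    ring
  have hpos (l : ℕ) : 0 < g l := by
    have := hcoef (l + 1) (by omega)
    push_cast [g] at this ⊢
    exact mul_pos (by positivity) (by linarith)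
  exact ⟨hsum.tsum_eq.symm, hasSum_lt (fun l => (hpos l).le) (hpos 0) hasSum_zero hsum⟩
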